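/- arXiv:2211.16854 — 5 statements merged into one kernel-verified Lean document; each statement's English description precedes it below -/
import Mathlib

section
/- Let G be a finite simple graph and let H = G[W] be a primitive induced subgraph of G. If M is a module of G with W ⊄ M, then M contains at most one vertex of W, i.e., |M ∩ W| ≤ 1. -/
/-- `M` is a module of `G`: every vertex outside `M` is adjacent either to all
vertices of `M` or to none of them. -/
def IsModule {V : Type} (G : SimpleGraph V) (M : Set V) : Prop :=
  ∀ z ∉ M, (∀ x ∈ M, G.Adj z x) ∨ (∀ x ∈ M, ¬ G.Adj z x)

/-- A graph is primitive if it has at least four vertices and all of its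
modules are trivial. -/
def IsPrimitive {V : Type} (G : SimpleGraph V) : Prop :=
  4 ≤ Nat.card V ∧
    ∀ M : Set V, IsModule G M → M = ∅ ∨ (∃ x, M = {x}) ∨ M = Set.univ

theorem IsModule.preimage_embedding {V U : Type} {G : SimpleGraph V} {H : SimpleGraph U}
    (f : H ↪g G) {M : Set V} (hM : IsModule G M) : IsModule H (f ⁻¹' M) := by
  intro z hz
  refine (hM (f z) hz).imp (fun h x hx => ?_) (fun h x hx => ?_)
  · exact f.map_adj_iff.mp (h (f x) hx)
  · exact fun hzx => h (f x) hx (f.map_adj_iff.mpr hzx)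

theorem IsPrimitive.ncard_le_one_of_isModule {V : Type} {G : SimpleGraph V}
    (hG : IsPrimitive G) {M : Set V} (hM : IsModule G M) (hne : M ≠ Set.univ) :
    M.ncard ≤ 1 := by
  rcases hG.2 M hM with rfl | ⟨x, rfl⟩ | rfl
  · simp
  · simp
  · exact absurd rfl hne

theorem module_inter_primitive_card_le_one_general {V : Type}
    (G : SimpleGraph V) (W : Set V) (hprim : IsPrimitive (G.induce W))
    (M : Set V) (hM : IsModule G M) (hW : ¬ W ⊆ M) :
    (M ∩ W).ncard ≤ 1 := by
  have hne : Subtype.val ⁻¹' M ≠ (Set.univ : Set W) := fun h =>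
    hW (by rwa [Set.preimage_eq_univ_iff, Subtype.range_coe] at h)
  have hcard : (M ∩ W).ncard = (Subtype.val ⁻¹' M : Set W).ncard := by
    rw [Set.inter_comm, ← Subtype.image_preimage_coe W M,
      Set.ncard_image_of_injective _ Subtype.val_injective]
  rw [hcard]
  exact hprim.ncard_le_one_of_isModule
    (hM.preimage_embedding (SimpleGraph.Embedding.induce W)) hne

/-- If `G[W]` is a primitive induced subgraph of `G` and `M` is a module of `G`
with `W ⊄ M`, then `M` contains at most one vertex of `W`. -/
theorem module_inter_primitive_card_le_one {V : Type} [Fintype V]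
    (G : SimpleGraph V) (W : Set V) (hprim : IsPrimitive (G.induce W))
    (M : Set V) (hM : IsModule G M) (hW : ¬ W ⊆ M) :
    (M ∩ W).ncard ≤ 1 :=
  module_inter_primitive_card_le_one_general G W hprim M hM hW
end

section
/- Let G be a finite simple graph and let H = G[W] be a primitive induced subgraph of G. Let M be a strong module of G that is inclusion-minimal with respect to containing W, i.e., W ⊆ M and no strong module M'' of G satisfies W ⊆ M'' ⊊ M. Then M is a prime module of G: |M| > 1, the induced subgraph G[M] is connected, and the complement of G[M] is connected. -/
/-- A module `M` of `G` is strong if it overlaps no other module of `G`. -/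
def IsStrongModule {V : Type} (G : SimpleGraph V) (M : Set V) : Prop :=
  IsModule G M ∧
    ∀ M' : Set V, IsModule G M' → M ∩ M' = ∅ ∨ M ∩ M' = M ∨ M ∩ M' = M'

/-!
If `M` is a strong module, every connected component `C` of `G[M]` is again a strong module of
`G`: a module `X ⊆ M` meeting both `C` and its complement in `C` has a vertex of `C \ X` adjacent
to `X`, hence to all of `X`, which puts `X` inside `C`. A primitive graph is connected (its
components are modules, hence singletons, and then any pair of vertices is a module), so `W` lies
in one component of `G[M]`, and minimality makes that component all of `M`. Modules, strong
modules and primitivity are invariant under complementation, so the same argument applied to `Gᶜ`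
shows that the complement of `G[M]` is connected.
-/

open SimpleGraph

section

variable {V : Type} {G : SimpleGraph V}

lemma isModule_compl_iff {X : Set V} : IsModule Gᶜ X ↔ IsModule G X := by
  refine forall₂_congr fun z hz => ?_
  have hadj : ∀ x ∈ X, (Gᶜ.Adj z x ↔ ¬ G.Adj z x) := fun x hx => by
    simp [ne_of_mem_of_not_mem hx hz |>.symm]
  rw [or_comm]
  exact or_congr (forall₂_congr fun x hx => by rw [hadj x hx, not_not])
    (forall₂_congr fun x hx => hadj x hx)

lemma isStrongModule_compl_iff {X : Set V} : IsStrongModule Gᶜ X ↔ IsStrongModule G X := by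
  simp only [IsStrongModule, isModule_compl_iff]

lemma IsPrimitive.compl (h : IsPrimitive G) : IsPrimitive Gᶜ :=
  ⟨h.1, fun M hM => h.2 M (isModule_compl_iff.mp hM)⟩

lemma induce_compl (s : Set V) : Gᶜ.induce s = (G.induce s)ᶜ := by
  ext a b
  simp [Subtype.ext_iff]

lemma isModule_supp (c : G.ConnectedComponent) : IsModule G c.supp :=
  fun _ hz => Or.inr fun _ hx hadj => hz (c.mem_supp_of_adj_mem_supp hx hadj.symm)

lemma IsModule.image_val {M : Set V} (hM : IsModule G M) {X : Set M}
    (hX : IsModule (G.induce M) X) : IsModule G (Subtype.val '' X) := by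
  intro z hz
  simp only [Set.forall_mem_image]
  by_cases hzM : z ∈ M
  · exact hX ⟨z, hzM⟩ fun h => hz ⟨_, h, rfl⟩
  · exact (hM z hzM).imp (fun h x _ => h x x.2) (fun h x _ => h x x.2)

lemma IsStrongModule.image_supp {M : Set V} (hM : IsStrongModule G M)
    (c : (G.induce M).ConnectedComponent) : IsStrongModule G (Subtype.val '' c.supp) := by
  set C := Subtype.val '' c.supp
  have hCM : C ⊆ M := Subtype.coe_image_subset M c.supp
  refine ⟨hM.1.image_val (isModule_supp c), fun X hX => ?_⟩
  rw [Set.inter_eq_left, Set.inter_eq_right]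
  rcases hM.2 X hX with hMX | hMX | hXM
  · exact Or.inl (Set.subset_empty_iff.mp (hMX ▸ Set.inter_subset_inter_left X hCM))
  · exact Or.inr (Or.inl (hCM.trans (Set.inter_eq_left.mp hMX)))
  rw [Set.inter_eq_right] at hXM
  by_contra! h
  obtain ⟨hCX, hnCX, hnXC⟩ := h
  obtain ⟨_, ⟨a, ha, rfl⟩, haX⟩ := hCX
  obtain ⟨_, ⟨d, hd, rfl⟩, hdX⟩ := Set.not_subset.mp hnCX
  obtain ⟨b, hbX, hbC⟩ := Set.not_subset.mp hnXC
  obtain ⟨p⟩ := c.reachable_of_mem_supp ha hd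
  obtain ⟨e, -, heX, heX'⟩ := p.exists_boundary_dart {t | t.1 ∈ X} haX hdX
  have hall : ∀ x ∈ X, G.Adj e.snd x :=
    (hX _ heX').resolve_right fun hnone => hnone _ heX e.adj.symm
  have he : e.snd ∈ c.supp := c.mem_supp_of_adj_mem_supp ha (hall a haX).symm
  exact hbC ⟨⟨b, hXM hbX⟩, c.mem_supp_of_adj_mem_supp he (hall b hbX), rfl⟩

lemma IsPrimitive.connected (h : IsPrimitive G) : G.Connected := by
  obtain ⟨hcard, htriv⟩ := h
  have : Finite V := Nat.finite_of_card_ne_zero (by omega)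
  have : Nonempty V := (Nat.card_pos_iff.mp (by omega)).1
  rw [connected_iff_exists_forall_reachable]
  by_contra! hdisc
  have hsingleton : ∀ c : G.ConnectedComponent, ∃ x, c.supp = {x} := fun c => by
    rcases htriv _ (isModule_supp c) with h0 | hx | huniv
    · exact absurd h0 c.nonempty_supp.ne_empty
    · exact hx
    · obtain ⟨v, rfl⟩ := c.exists_rep
      obtain ⟨w, hw⟩ := hdisc v
      exact absurd (ConnectedComponent.exact (huniv ▸ Set.mem_univ w : w ∈ _)).symm hw
  have hno_adj : ∀ u v, ¬ G.Adj u v := fun u v huv => by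
    obtain ⟨x, hx⟩ := hsingleton (G.connectedComponentMk u)
    have hu : u ∈ (G.connectedComponentMk u).supp := rfl
    have hv := (G.connectedComponentMk u).mem_supp_of_adj_mem_supp hu huv
    rw [hx, Set.mem_singleton_iff] at hu hv
    exact G.ne_of_adj huv (hu.trans hv.symm)
  obtain ⟨u, v, huv⟩ : ∃ u v : V, u ≠ v := by
    obtain ⟨w, hw⟩ := hdisc (Classical.arbitrary V)
    exact ⟨_, w, fun h => hw (h ▸ Reachable.refl _)⟩
  rcases htriv {u, v} (fun z _ => Or.inr fun x _ => hno_adj z x) with h | ⟨x, hx⟩ | h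
  · exact (Set.insert_nonempty u {v}).ne_empty h
  · have hu : u ∈ ({x} : Set V) := hx ▸ Set.mem_insert u {v}
    have hv : v ∈ ({x} : Set V) := hx ▸ Set.mem_insert_of_mem u rfl
    exact huv (hu.trans hv.symm)
  · have := Set.ncard_pair huv
    rw [h, Set.ncard_univ] at this
    omega

lemma connected_induce_of_minimal {W M : Set V} (hW : (G.induce W).Connected)
    (hM : IsStrongModule G M) (hWM : W ⊆ M)
    (hmin : ∀ M'' : Set V, IsStrongModule G M'' → W ⊆ M'' → ¬ M'' ⊂ M) :
    (G.induce M).Connected := by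
  obtain ⟨w₀⟩ := hW.nonempty
  let ι := G.induceHomOfLE hWM
  let c := (G.induce M).connectedComponentMk (ι w₀)
  have hWC : W ⊆ Subtype.val '' c.supp := fun w hw =>
    ⟨ι ⟨w, hw⟩, ConnectedComponent.sound ((hW.preconnected _ _).map ι.toHom), rfl⟩
  have hMC : M ⊆ Subtype.val '' c.supp := by
    by_contra h
    exact hmin _ (hM.image_supp c) hWC ⟨Subtype.coe_image_subset M c.supp, h⟩
  rw [connected_iff_exists_forall_reachable]
  refine ⟨ι w₀, fun v => ?_⟩
  obtain ⟨v', hv', hv'v⟩ := hMC v.2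
  rw [← Subtype.ext hv'v]
  exact ConnectedComponent.exact hv'.symm

end

/-- If `G[W]` is a primitive induced subgraph of `G` and `M` is a strong module
of `G` that is inclusion-minimal with respect to containing `W`, then `M` is a
prime module of `G`: `|M| > 1` and both `G[M]` and its complement are
connected. -/
theorem minimal_strongModule_containing_primitive_is_prime {V : Type} [Fintype V]
    (G : SimpleGraph V) (W : Set V) (hprim : IsPrimitive (G.induce W))
    (M : Set V) (hM : IsStrongModule G M) (hWM : W ⊆ M)
    (hmin : ∀ M'' : Set V, IsStrongModule G M'' → W ⊆ M'' → ¬ M'' ⊂ M) :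
    1 < M.ncard ∧ (G.induce M).Connected ∧ ((G.induce M)ᶜ).Connected := by
  refine ⟨?_, connected_induce_of_minimal hprim.connected hM hWM hmin, ?_⟩
  · have h4 : 4 ≤ W.ncard := Nat.card_coe_set_eq W ▸ hprim.1
    have := Set.ncard_le_ncard hWM M.toFinite
    omega
  · rw [← induce_compl]
    refine connected_induce_of_minimal ?_ (isStrongModule_compl_iff.mpr hM) hWM
      fun M'' h => hmin M'' (isStrongModule_compl_iff.mp h)
    rw [induce_compl]
    exact hprim.compl.connected
end

section
/- A finite simple graph G with a nonempty vertex set is a cograph if and only if G contains no induced subgraph isomorphic to the path P₄ on four vertices. -/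
/-- The join of two vertex-disjoint graphs: their disjoint union together with
all edges between the two vertex sets. -/
def graphJoin {α β : Type} (G : SimpleGraph α) (H : SimpleGraph β) :
    SimpleGraph (α ⊕ β) where
  Adj u v := match u, v with
    | Sum.inl u, Sum.inl v => G.Adj u v
    | Sum.inr u, Sum.inr v => H.Adj u v
    | _, _ => True
  symm := ⟨by
    rintro (u | u) (v | v) h
    · exact h.symm
    · trivial
    · trivial
    · exact h.symm⟩
  loopless := ⟨by
    rintro (u | u) h
    · exact G.irrefl h
    · exact H.irrefl h⟩

/-- The class of cographs: the smallest class of (finite) simple graphs,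
closed under isomorphism, containing the one-vertex graph `K₁` and closed
under disjoint unions and joins of vertex-disjoint members. -/
inductive IsCograph : {V : Type} → SimpleGraph V → Prop
  | k1 : IsCograph (⊤ : SimpleGraph (Fin 1))
  | disjUnion {α β : Type} {G : SimpleGraph α} {H : SimpleGraph β} :
      IsCograph G → IsCograph H → IsCograph (G ⊕g H)
  | join {α β : Type} {G : SimpleGraph α} {H : SimpleGraph β} :
      IsCograph G → IsCograph H → IsCograph (graphJoin G H)
  | iso {α β : Type} {G : SimpleGraph α} {H : SimpleGraph β} :
      IsCograph G → (G ≃g H) → IsCograph H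

/-!
A cograph is `P₄`-free because `P₄` is connected and so is its complement (`P₄` is
self-complementary): an induced copy of `P₄` in `G ⊕g H` lies inside `G` or inside `H`, and by
complementation the same holds for the join.

Conversely (Seinsche), a `P₄`-free graph on at least two vertices is disconnected or has a
disconnected complement; splitting along a component of `G` or of `Gᶜ` then presents `G` as a
disjoint union or a join of smaller `P₄`-free graphs. For Seinsche's lemma, suppose `G` and `Gᶜ`
are connected and remove a vertex `x` for which `G - x` stays connected. By induction `Gᶜ - x`
is disconnected, and a non-neighbour `z` of `x` in `Gᶜ` together with a component of `Gᶜ - x`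
avoiding `z` yields an induced `P₄` in `Gᶜ`, hence one in `G`.
-/

open SimpleGraph

namespace SimpleGraph

variable {V α β : Type} {G : SimpleGraph V}

theorem compl_induce (G : SimpleGraph V) (s : Set V) : (G.induce s)ᶜ = Gᶜ.induce s := by
  ext u v
  simp [compl_adj, Subtype.ext_iff]

theorem graphJoin_eq_compl_sum_compl (G : SimpleGraph α) (H : SimpleGraph β) :
    graphJoin G H = (Gᶜ ⊕g Hᶜ)ᶜ := by
  ext (u | u) (v | v) <;> simp [graphJoin, compl_adj] <;>
    exact ⟨fun h => ⟨h.ne, fun _ => h⟩, fun h => h.2 h.1⟩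

theorem pathGraph_four_isIndContained_of_adj {a b c d : V}
    (hab : G.Adj a b) (hbc : G.Adj b c) (hcd : G.Adj c d)
    (hac : ¬ G.Adj a c) (hbd : ¬ G.Adj b d) (had : ¬ G.Adj a d) :
    pathGraph 4 ⊴ G := by
  have hac' : a ≠ c := by rintro rfl; exact had hcd
  have hbd' : b ≠ d := by rintro rfl; exact had hab
  have had' : a ≠ d := by rintro rfl; exact hac hcd.symm
  refine ⟨⟨⟨![a, b, c, d], fun i j hij => ?_⟩, fun {i j} => ?_⟩⟩
  · fin_cases i <;> fin_cases j <;>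
      simp_all [hab.ne, hbc.ne, hcd.ne, hab.ne.symm, hbc.ne.symm, hcd.ne.symm, hac'.symm,
        hbd'.symm, had'.symm]
  · change G.Adj (![a, b, c, d] i) (![a, b, c, d] j) ↔ _
    fin_cases i <;> fin_cases j <;> simp_all [pathGraph_adj, adj_comm]

def pathGraphFourIsoCompl : pathGraph 4 ≃g (pathGraph 4)ᶜ :=
  ⟨⟨![1, 3, 0, 2], ![2, 0, 3, 1], by decide, by decide⟩, fun {a b} => by
    simp only [compl_adj, pathGraph_adj]; revert a b; decide⟩

theorem pathGraph_four_isIndContained_compl_iff :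
    pathGraph 4 ⊴ Gᶜ ↔ pathGraph 4 ⊴ G :=
  calc pathGraph 4 ⊴ Gᶜ ↔ (pathGraph 4)ᶜ ⊴ Gᶜ :=
        ⟨pathGraphFourIsoCompl.isIndContained'.trans, pathGraphFourIsoCompl.isIndContained.trans⟩
    _ ↔ pathGraph 4 ⊴ G := compl_isIndContained_compl

theorem Embedding.isIndContained_of_forall_eq_inl {A : SimpleGraph V} {G : SimpleGraph α}
    {H : SimpleGraph β} (f : A ↪g G ⊕g H) (hf : ∀ v, ∃ a, f v = Sum.inl a) : A ⊴ G := by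
  choose g hg using hf
  refine ⟨⟨⟨g, fun v w h => f.injective (by rw [hg, hg, h])⟩, fun {v w} => ?_⟩⟩
  rw [← f.map_adj_iff, hg, hg]
  rfl

theorem Connected.isIndContained_sum {A : SimpleGraph V} {G : SimpleGraph α} {H : SimpleGraph β}
    (hA : A.Connected) (h : A ⊴ G ⊕g H) : A ⊴ G ∨ A ⊴ H := by
  obtain ⟨f⟩ := h
  obtain ⟨v₀⟩ := hA.nonempty
  wlog h₀ : ∃ a, f v₀ = Sum.inl a generalizing α β G H with H
  · obtain ⟨b, hb⟩ : ∃ b, f v₀ = Sum.inr b := by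
      rcases h : f v₀ with a | b
      exacts [absurd ⟨a, h⟩ h₀, ⟨b, rfl⟩]
    exact (H (Iso.sumComm.toEmbedding.comp f) ⟨b, by simp [hb]⟩).symm
  obtain ⟨a, ha⟩ := h₀
  refine .inl (f.isIndContained_of_forall_eq_inl fun v => ?_)
  rcases hv : f v with a' | b
  · exact ⟨a', rfl⟩
  · have := (hA.preconnected v₀ v).map f.toHom
    simp only [RelEmbedding.coe_toRelHom, ha, hv] at this
    exact absurd this (not_reachable_sum_inl_inr a b)

theorem isIndContained_graphJoin_of_connected_compl {A : SimpleGraph V} {G : SimpleGraph α}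
    {H : SimpleGraph β} (hA : Aᶜ.Connected) (h : A ⊴ graphJoin G H) : A ⊴ G ∨ A ⊴ H := by
  rw [graphJoin_eq_compl_sum_compl, ← compl_isIndContained_compl, compl_compl] at h
  simpa only [compl_isIndContained_compl] using hA.isIndContained_sum h

/-- If every edge leaving `C` ends at `x`, then `p – q – x – d` is an induced `P₄`, where `pq` is
an edge of `C` at which a path from `z` to `x` first enters the neighbourhood of `x`, and `d` is
a neighbour of `x` outside `C`. -/
theorem pathGraph_four_isIndContained_of_separating (hG : G.Connected) {x z c : V} {C : Set V}
    (hzC : z ∈ C) (hxz : ¬ G.Adj x z) (hxC : x ∉ C) (hcC : c ∉ C) (hcx : c ≠ x)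
    (hsep : ∀ u ∈ C, ∀ v ∉ C, G.Adj u v → v = x) : pathGraph 4 ⊴ G := by
  obtain ⟨d, -, ⟨hdC, hdx⟩, hd⟩ := (hG.preconnected c x).some.exists_boundary_dart
    {v | v ∉ C ∧ v ≠ x} ⟨hcC, hcx⟩ (by simp)
  have hxd : G.Adj x d.fst := by
    by_contra hnd
    exact hd ⟨fun hC => hdx (hsep _ hC _ hdC d.adj.symm), fun h => hnd (h ▸ d.adj.symm)⟩
  obtain ⟨e, -, ⟨heC, hxe⟩, he⟩ := (hG.preconnected z x).some.exists_boundary_dart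
    {v | v ∈ C ∧ ¬ G.Adj x v} ⟨hzC, hxz⟩ (by simp [hxC])
  have hex : e.snd ≠ x := fun h => hxe (h ▸ e.adj.symm)
  have heC' : e.snd ∈ C := by_contra fun hC => hex (hsep _ heC _ hC e.adj)
  have hxe' : G.Adj x e.snd := by_contra fun h => he ⟨heC', h⟩
  have hd_not_adj : ∀ u ∈ C, ¬ G.Adj u d.fst := fun u hu h => hdx (hsep u hu _ hdC h)
  exact pathGraph_four_isIndContained_of_adj e.adj hxe'.symm hxd (fun h => hxe h.symm)
    (hd_not_adj _ heC') (hd_not_adj _ heC)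

theorem pathGraph_four_isIndContained_of_not_preconnected_induce (hG : G.Connected) {x z : V}
    (hzx : z ≠ x) (hxz : ¬ G.Adj x z) (h : ¬ (G.induce {x}ᶜ).Preconnected) :
    pathGraph 4 ⊴ G := by
  set G' := G.induce {x}ᶜ
  let z' : ({x}ᶜ : Set V) := ⟨z, hzx⟩
  obtain ⟨c, hc⟩ : ∃ c, ¬ G'.Reachable z' c := by
    by_contra! hall
    exact h fun a b => (hall a).symm.trans (hall b)
  refine pathGraph_four_isIndContained_of_separating hG
    (C := {v | ∃ hv : v ≠ x, G'.Reachable z' ⟨v, hv⟩})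
    ⟨hzx, .rfl⟩ hxz (fun ⟨hx, _⟩ => hx rfl) (fun ⟨_, hr⟩ => hc hr) c.2 ?_
  rintro u ⟨hux, hu⟩ v hv huv
  by_contra hvx
  exact hv ⟨hvx, hu.trans (Adj.reachable (G := G') (u := ⟨u, hux⟩) (v := ⟨v, hvx⟩) huv)⟩

theorem not_connected_or_not_connected_compl_of_not_pathGraph_four_isIndContained [Finite V]
    [Nontrivial V] (h : ¬ pathGraph 4 ⊴ G) : ¬ G.Connected ∨ ¬ Gᶜ.Connected := by
  induction hn : Nat.card V using Nat.strong_induction_on generalizing V with | _ n ih =>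
  by_contra! ⟨hG, hGc⟩
  obtain ⟨x, hx⟩ := hG.exists_connected_induce_compl_singleton_of_finite_nontrivial
  obtain ⟨y, hxy⟩ := hG.preconnected.exists_adj_of_nontrivial x
  obtain ⟨z, hzx, hxz⟩ := hGc.preconnected.exists_adj_of_nontrivial x
  have : Nontrivial ({x}ᶜ : Set V) :=
    ⟨⟨y, hxy.ne.symm⟩, ⟨z, hzx.symm⟩, fun hyz => hxz (Subtype.mk.inj hyz ▸ hxy)⟩
  have hfree : ¬ pathGraph 4 ⊴ G.induce {x}ᶜ :=
    fun h' => h (h'.trans (Embedding.induce _).isIndContained)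
  have hcard : Nat.card ({x}ᶜ : Set V) < n := hn ▸ Finite.card_subtype_lt (x := x) (by simp)
  have hcompl := (ih _ hcard hfree rfl).resolve_left (not_not_intro hx)
  rw [compl_induce, connected_iff, not_and_or] at hcompl
  refine h (pathGraph_four_isIndContained_compl_iff.mp ?_)
  refine pathGraph_four_isIndContained_of_not_preconnected_induce hGc hxy.ne.symm ?_ ?_
  · simp [compl_adj, hxy]
  · exact hcompl.resolve_right (not_not_intro inferInstance)

theorem exists_nonempty_compl_nonempty_of_not_preconnected (h : ¬ G.Preconnected) :
    ∃ S : Set V, S.Nonempty ∧ Sᶜ.Nonempty ∧ ∀ u ∈ S, ∀ v ∉ S, ¬ G.Adj u v := by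
  simp only [Preconnected, not_forall] at h
  obtain ⟨a, b, hab⟩ := h
  exact ⟨{v | G.Reachable a v}, ⟨a, .rfl⟩, ⟨b, hab⟩,
    fun u hu v hv huv => hv (hu.trans huv.reachable)⟩

def Iso.sumInduceCompl (S : Set V) [DecidablePred (· ∈ S)]
    (hS : ∀ u ∈ S, ∀ v ∉ S, ¬ G.Adj u v) : G.induce S ⊕g G.induce Sᶜ ≃g G :=
  ⟨Equiv.Set.sumCompl S, by
    rintro (u | u) (v | v)
    · rfl
    · simpa using hS u u.2 v v.2
    · simpa [adj_comm] using hS v v.2 u u.2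
    · rfl⟩

def Iso.graphJoinInduceCompl (S : Set V) [DecidablePred (· ∈ S)]
    (hS : ∀ u ∈ S, ∀ v ∉ S, G.Adj u v) : graphJoin (G.induce S) (G.induce Sᶜ) ≃g G :=
  ⟨Equiv.Set.sumCompl S, by
    rintro (u | u) (v | v)
    · rfl
    · simpa [graphJoin] using hS u u.2 v v.2
    · simpa [graphJoin, adj_comm] using hS v v.2 u u.2
    · rfl⟩

end SimpleGraph

theorem IsCograph.not_pathGraph_four_isIndContained {V : Type} {G : SimpleGraph V}
    (hG : IsCograph G) : ¬ pathGraph 4 ⊴ G := by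
  induction hG with
  | k1 =>
    rintro ⟨f⟩
    exact absurd (f.injective (Subsingleton.elim _ _)) (by decide : (0 : Fin 4) ≠ 1)
  | disjUnion _ _ ihG ihH =>
    exact fun h => ((pathGraph_connected 3).isIndContained_sum h).elim ihG ihH
  | join _ _ ihG ihH =>
    have hc : (pathGraph 4)ᶜ.Connected :=
      pathGraphFourIsoCompl.connected_iff.mp (pathGraph_connected 3)
    exact fun h => (isIndContained_graphJoin_of_connected_compl hc h).elim ihG ihH
  | iso _ e ih => exact fun h => ih (h.trans e.isIndContained')

theorem IsCograph.of_subsingleton {V : Type} [Nonempty V] [Subsingleton V] (G : SimpleGraph V) :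
    IsCograph G := by
  have : Unique V := ⟨⟨Classical.arbitrary V⟩, fun _ => Subsingleton.elim _ _⟩
  exact .iso .k1 ⟨Equiv.ofUnique (Fin 1) V, fun {a b} => by simp [Subsingleton.elim a b]⟩

theorem IsCograph.of_not_pathGraph_four_isIndContained {V : Type} [Finite V] [Nonempty V]
    {G : SimpleGraph V} (h : ¬ pathGraph 4 ⊴ G) : IsCograph G := by
  induction hn : Nat.card V using Nat.strong_induction_on generalizing V with | _ n ih =>
  classical
  have ih_induce (S : Set V) (hS : S.Nonempty) (hSc : Sᶜ.Nonempty) : IsCograph (G.induce S) := by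
    have : Nonempty S := hS.to_subtype
    obtain ⟨b, hb⟩ := hSc
    exact ih _ (hn ▸ Finite.card_subtype_lt hb)
      (fun h' => h (h'.trans (Embedding.induce S).isIndContained)) rfl
  rcases subsingleton_or_nontrivial V with hV | hV
  · exact .of_subsingleton G
  rcases not_connected_or_not_connected_compl_of_not_pathGraph_four_isIndContained h with hG | hG
  · obtain ⟨S, hS, hSc, hsep⟩ := exists_nonempty_compl_nonempty_of_not_preconnected fun h => hG ⟨h⟩
    exact .iso (.disjUnion (ih_induce S hS hSc) (ih_induce Sᶜ hSc (by rwa [compl_compl])))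
      (Iso.sumInduceCompl S hsep)
  · obtain ⟨S, hS, hSc, hsep⟩ := exists_nonempty_compl_nonempty_of_not_preconnected fun h => hG ⟨h⟩
    refine .iso (.join (ih_induce S hS hSc) (ih_induce Sᶜ hSc (by rwa [compl_compl])))
      (Iso.graphJoinInduceCompl S fun u hu v hv => ?_)
    by_contra huv
    exact hsep u hu v hv ⟨fun h => hv (h ▸ hu), huv⟩

/-- A finite simple graph with a nonempty vertex set is a cograph if and only
if it contains no induced subgraph isomorphic to the path `P₄` on four
vertices. -/
theorem isCograph_iff_p4_free {V : Type} [Fintype V] [Nonempty V]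
    (G : SimpleGraph V) :
    IsCograph G ↔ ¬ Nonempty (SimpleGraph.pathGraph 4 ↪g G) :=
  ⟨IsCograph.not_pathGraph_four_isIndContained, IsCograph.of_not_pathGraph_four_isIndContained⟩
end

section
/- Every induced subgraph (on a nonempty vertex set) of a pseudo-cograph is a pseudo-cograph. -/
/-- A graph is P₄-free (i.e., a cograph) if it has no induced subgraph
isomorphic to the path on four vertices. -/
def IsP4Free {V : Type} (G : SimpleGraph V) : Prop :=
  ¬ Nonempty (SimpleGraph.pathGraph 4 ↪g G)

/-- `G` is a `(v, G[V1], G[V2])`-pseudo-cograph. -/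
def IsPseudoCographAt {V : Type} (G : SimpleGraph V) (v : V) (V1 V2 : Set V) : Prop :=
  V1 ∪ V2 = Set.univ ∧ V1 ∩ V2 = {v} ∧ 1 < V1.ncard ∧ 1 < V2.ncard ∧
  IsP4Free (G.induce V1) ∧ IsP4Free (G.induce V2) ∧
  ((∀ x ∈ V1 \ {v}, ∀ y ∈ V2 \ {v}, G.Adj x y) ∨
   (∀ x ∈ V1 \ {v}, ∀ y ∈ V2 \ {v}, ¬ G.Adj x y))

/-- `G` is a pseudo-cograph. -/
def IsPseudoCograph {V : Type} (G : SimpleGraph V) : Prop :=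
  Nat.card V ≤ 2 ∨ ∃ (v : V) (V1 V2 : Set V), IsPseudoCographAt G v V1 V2

/-!
If `W` lies inside one side of the decomposition `(v, G₁, G₂)` of `G`, then `G[W]` is a cograph,
so by Seinsche's theorem `W` splits into two nonempty parts that are complete or anticomplete to
each other. The same holds if `W` meets both sides but misses `v`: take the traces of the two
sides. Attaching a vertex `b` of a part with at least two vertices to the other part keeps that
part `P₄`-free, since every vertex of an induced `P₄` has both a neighbour and a non-neighbour on
it; this yields a `(b, ·, ·)`-pseudo-cograph decomposition of `G[W]`. If `W` meets both sides
and contains `v`, the traces of the two sides already form a decomposition at `v`.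
-/

namespace SimpleGraph

variable {V W : Type} {G : SimpleGraph V} {s t A B : Set V} {a b c d u v x : V}

def IsInducedP4 (G : SimpleGraph V) (a b c d : V) : Prop :=
  G.Adj a b ∧ G.Adj b c ∧ G.Adj c d ∧ ¬ G.Adj a c ∧ ¬ G.Adj a d ∧ ¬ G.Adj b d

theorem IsInducedP4.ne (h : G.IsInducedP4 a b c d) : a ≠ c ∧ a ≠ d ∧ b ≠ d := by
  obtain ⟨hab, -, hcd, hac, had, -⟩ := h
  exact ⟨fun h => had (h ▸ hcd), fun h => hac (h ▸ hcd.symm), fun h => had (h ▸ hab)⟩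

def HasInducedP4On (G : SimpleGraph V) (s : Set V) : Prop :=
  ∃ a ∈ s, ∃ b ∈ s, ∃ c ∈ s, ∃ d ∈ s, G.IsInducedP4 a b c d

theorem HasInducedP4On.mono (hst : s ⊆ t) (h : G.HasInducedP4On s) : G.HasInducedP4On t := by
  obtain ⟨a, ha, b, hb, c, hc, d, hd, h⟩ := h
  exact ⟨a, hst ha, b, hst hb, c, hst hc, d, hst hd, h⟩

theorem HasInducedP4On.map {H : SimpleGraph W} (f : H ↪g G) {s : Set W}
    (h : H.HasInducedP4On s) : G.HasInducedP4On (f '' s) := by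
  obtain ⟨a, ha, b, hb, c, hc, d, hd, hab, hbc, hcd, hac, had, hbd⟩ := h
  exact ⟨f a, Set.mem_image_of_mem f ha, f b, Set.mem_image_of_mem f hb,
    f c, Set.mem_image_of_mem f hc, f d, Set.mem_image_of_mem f hd,
    f.map_adj_iff.2 hab, f.map_adj_iff.2 hbc, f.map_adj_iff.2 hcd,
    mt f.map_adj_iff.1 hac, mt f.map_adj_iff.1 had, mt f.map_adj_iff.1 hbd⟩

/-- The complement of the path `a b c d` is the path `c a d b`. -/
theorem HasInducedP4On.of_compl (h : Gᶜ.HasInducedP4On s) : G.HasInducedP4On s := by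
  obtain ⟨a, ha, b, hb, c, hc, d, hd, hP4⟩ := h
  obtain ⟨hac', had', hbd'⟩ := hP4.ne
  obtain ⟨hab, hbc, hcd, hac, had, hbd⟩ := hP4
  simp only [compl_adj, not_and, not_not] at hab hbc hcd hac had hbd
  exact ⟨c, hc, a, ha, d, hd, b, hb, (hac hac').symm, had had', (hbd hbd').symm,
    hcd.2, fun h => hbc.2 h.symm, hab.2⟩

theorem isP4Free_induce_iff : IsP4Free (G.induce s) ↔ ¬ G.HasInducedP4On s := by
  refine ⟨?_, ?_⟩
  · rintro hfree ⟨a, ha, b, hb, c, hc, d, hd, hP4⟩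
    obtain ⟨hac', had', hbd'⟩ := hP4.ne
    obtain ⟨hab, hbc, hcd, hac, had, hbd⟩ := hP4
    set f : Fin 4 → s := ![⟨a, ha⟩, ⟨b, hb⟩, ⟨c, hc⟩, ⟨d, hd⟩]
    have hf (i j : Fin 4) : G.Adj (f i) (f j) ↔ (pathGraph 4).Adj i j := by
      fin_cases i <;> fin_cases j <;> simp [f, pathGraph_adj, hab, hbc, hcd, hac, had, hbd,
        hab.symm, hbc.symm, hcd.symm, G.adj_comm _ a, G.adj_comm _ b]
    refine hfree ⟨⟨⟨f, fun i j hij => ?_⟩, fun {i j} => hf i j⟩⟩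
    fin_cases i <;> fin_cases j <;>
      simp_all [f, Subtype.ext_iff, eq_comm, hab.ne, hbc.ne, hcd.ne]
  · rintro h ⟨f⟩
    have adj (i j : Fin 4) : G.Adj (f i) (f j) ↔ (pathGraph 4).Adj i j := f.map_adj_iff
    refine h ⟨f 0, (f 0).2, f 1, (f 1).2, f 2, (f 2).2, f 3, (f 3).2, ?_⟩
    simp only [IsInducedP4, adj, pathGraph_adj]
    decide

def CompleteOrAnticomplete (G : SimpleGraph V) (A B : Set V) : Prop :=
  (∀ x ∈ A, ∀ y ∈ B, G.Adj x y) ∨ ∀ x ∈ A, ∀ y ∈ B, ¬ G.Adj x y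

theorem CompleteOrAnticomplete.symm (h : G.CompleteOrAnticomplete A B) :
    G.CompleteOrAnticomplete B A :=
  h.imp (fun h x hx y hy => (h y hy x hx).symm) (fun h x hx y hy hxy => h y hy x hx hxy.symm)

theorem CompleteOrAnticomplete.mono {A' B' : Set V} (hA : A' ⊆ A) (hB : B' ⊆ B)
    (h : G.CompleteOrAnticomplete A B) : G.CompleteOrAnticomplete A' B' :=
  h.imp (fun h x hx y hy => h x (hA hx) y (hB hy)) (fun h x hx y hy => h x (hA hx) y (hB hy))

theorem CompleteOrAnticomplete.comap (f : W ↪ V) (h : G.CompleteOrAnticomplete A B) :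
    (G.comap f).CompleteOrAnticomplete (f ⁻¹' A) (f ⁻¹' B) :=
  h.imp (fun h _ hx _ hy => h _ hx _ hy) (fun h _ hx _ hy => h _ hx _ hy)

theorem CompleteOrAnticomplete.of_compl (hAB : Disjoint A B)
    (h : Gᶜ.CompleteOrAnticomplete A B) : G.CompleteOrAnticomplete A B := by
  refine h.elim (fun h => Or.inr fun x hx y hy => ((compl_adj _ _ _).1 (h x hx y hy)).2)
    (fun h => Or.inl fun x hx y hy => ?_)
  by_contra hxy
  exact h x hx y hy ((compl_adj _ _ _).2 ⟨hAB.ne_of_mem hx hy, hxy⟩)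

theorem not_hasInducedP4On_insert (hv : G.CompleteOrAnticomplete {v} t)
    (ht : ¬ G.HasInducedP4On t) : ¬ G.HasInducedP4On (insert v t) := by
  rintro ⟨a, ha, b, hb, c, hc, d, hd, hab, hbc, hcd, hac, had, hbd⟩
  simp only [CompleteOrAnticomplete, Set.mem_singleton_iff, forall_eq] at hv
  rcases ha with rfl | ha <;> rcases hb with rfl | hb <;> rcases hc with rfl | hc <;>
    rcases hd with rfl | hd <;>
    grind [SimpleGraph.irrefl, SimpleGraph.adj_symm, HasInducedP4On, IsInducedP4]

def IsHomogeneousSplit (G : SimpleGraph V) (A B : Set V) : Prop :=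
  Disjoint A B ∧ A.Nonempty ∧ B.Nonempty ∧ G.CompleteOrAnticomplete A B

theorem IsHomogeneousSplit.symm (h : G.IsHomogeneousSplit A B) : G.IsHomogeneousSplit B A :=
  ⟨h.1.symm, h.2.2.1, h.2.1, h.2.2.2.symm⟩

theorem IsHomogeneousSplit.of_compl (h : Gᶜ.IsHomogeneousSplit A B) :
    G.IsHomogeneousSplit A B :=
  ⟨h.1, h.2.1, h.2.2.1, h.2.2.2.of_compl h.1⟩

theorem isHomogeneousSplit_singleton (huv : u ≠ v) : G.IsHomogeneousSplit {u} {v} := by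
  refine ⟨Set.disjoint_singleton.2 huv, Set.singleton_nonempty u, Set.singleton_nonempty v, ?_⟩
  simp only [CompleteOrAnticomplete, Set.mem_singleton_iff, forall_eq]
  exact em _

theorem isHomogeneousSplit_insert_of_forall_not_adj (hvB : v ∉ B) (hAB : Disjoint A B)
    (hB : B.Nonempty) (hanti : ∀ x ∈ A, ∀ y ∈ B, ¬ G.Adj x y) (hv : ∀ y ∈ B, ¬ G.Adj v y) :
    G.IsHomogeneousSplit B (insert v A) := by
  refine ⟨Set.disjoint_insert_right.2 ⟨hvB, hAB.symm⟩, hB, Set.insert_nonempty v A, Or.inr ?_⟩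
  rintro x hx y (rfl | hy) hxy
  · exact hv x hx hxy.symm
  · exact hanti y hy x hx hxy.symm

/-- A non-neighbour `y` of `v` adjacent to a neighbour `z` of `v` would give the induced path
`y z v b` or `y z v a`. -/
theorem isHomogeneousSplit_nonneighbors (hv : v ∉ A ∪ B)
    (hanti : ∀ x ∈ A, ∀ y ∈ B, ¬ G.Adj x y) (ha : a ∈ A) (hva : G.Adj v a) (hb : b ∈ B)
    (hvb : G.Adj v b) (hx : x ∈ A ∪ B) (hvx : ¬ G.Adj v x)
    (hP4 : ¬ G.HasInducedP4On (insert v (A ∪ B))) :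
    G.IsHomogeneousSplit {y ∈ A ∪ B | ¬ G.Adj v y} (insert v {y ∈ A ∪ B | G.Adj v y}) := by
  refine ⟨?_, ⟨x, hx, hvx⟩, Set.insert_nonempty _ _, Or.inr ?_⟩
  · exact Set.disjoint_insert_right.2
      ⟨fun h => hv h.1, Set.disjoint_left.2 fun y hy hy' => hy.2 hy'.2⟩
  rintro y ⟨hy, hvy⟩ z (rfl | ⟨hz, hvz⟩) hyz
  · exact hvy hyz.symm
  have hmem : ∀ w ∈ A ∪ B, w ∈ insert v (A ∪ B) := fun w => Set.mem_insert_of_mem v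
  rcases hy with hyA | hyB <;> rcases hz with hzA | hzB
  · exact hP4 ⟨y, hmem y (.inl hyA), z, hmem z (.inl hzA), v, Set.mem_insert v _, b,
      hmem b (.inr hb), hyz, hvz.symm, hvb, fun h => hvy h.symm, hanti y hyA b hb,
      hanti z hzA b hb⟩
  · exact hanti y hyA z hzB hyz
  · exact hanti z hzA y hyB hyz.symm
  · exact hP4 ⟨y, hmem y (.inr hyB), z, hmem z (.inr hzB), v, Set.mem_insert v _, a,
      hmem a (.inl ha), hyz, hvz.symm, hva, fun h => hvy h.symm,
      fun h => hanti a ha y hyB h.symm, fun h => hanti a ha z hzB h.symm⟩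

theorem exists_isHomogeneousSplit_insert (hv : v ∉ A ∪ B) (hAB : Disjoint A B)
    (hA : A.Nonempty) (hB : B.Nonempty) (hanti : ∀ x ∈ A, ∀ y ∈ B, ¬ G.Adj x y)
    (hP4 : ¬ G.HasInducedP4On (insert v (A ∪ B))) :
    ∃ A' B', A' ∪ B' = insert v (A ∪ B) ∧ G.IsHomogeneousSplit A' B' := by
  have hvAB : v ∉ A ∧ v ∉ B := not_or.1 hv
  by_cases hvB : ∃ b ∈ B, G.Adj v b
  swap
  · push Not at hvB
    refine ⟨B, insert v A, by rw [Set.union_insert, Set.union_comm],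
      isHomogeneousSplit_insert_of_forall_not_adj hvAB.2 hAB hB hanti hvB⟩
  by_cases hvA : ∃ a ∈ A, G.Adj v a
  swap
  · push Not at hvA
    refine ⟨A, insert v B, Set.union_insert, isHomogeneousSplit_insert_of_forall_not_adj hvAB.1
      hAB.symm hA (fun x hx y hy hxy => hanti y hy x hx hxy.symm) hvA⟩
  obtain ⟨b, hb, hvb⟩ := hvB
  obtain ⟨a, ha, hva⟩ := hvA
  by_cases hall : ∀ y ∈ A ∪ B, G.Adj v y
  · refine ⟨{v}, A ∪ B, Set.singleton_union, Set.disjoint_singleton_left.2 hv,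
      Set.singleton_nonempty v, hA.mono Set.subset_union_left, Or.inl ?_⟩
    rintro x rfl y hy
    exact hall y hy
  push Not at hall
  obtain ⟨x, hx, hvx⟩ := hall
  refine ⟨_, _, ?_, isHomogeneousSplit_nonneighbors hv hanti ha hva hb hvb hx hvx hP4⟩
  ext y
  simp only [Set.mem_union, Set.mem_insert_iff, Set.mem_ofPred_eq]
  tauto

/-- Seinsche's theorem. -/
theorem exists_isHomogeneousSplit_of_not_hasInducedP4On (hs : 1 < s.ncard)
    (h : ¬ G.HasInducedP4On s) : ∃ A B, A ∪ B = s ∧ G.IsHomogeneousSplit A B := by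
  induction s, Set.finite_of_ncard_pos (zero_lt_one.trans hs) using Set.Finite.induction_on
    generalizing G with
  | empty => simp at hs
  | @insert v s hv hfin ih =>
    rw [Set.ncard_insert_of_notMem hv hfin] at hs
    rcases (Nat.lt_succ_iff.1 hs).lt_or_eq with hs | hs
    · obtain ⟨A, B, rfl, hAB, hA, hB, hcomplete | hanti⟩ :=
        ih hs (fun h' => h (h'.mono (Set.subset_insert v s)))
      · have hanti' : ∀ x ∈ A, ∀ y ∈ B, ¬ Gᶜ.Adj x y := fun x hx y hy hxy =>
          ((compl_adj _ _ _).1 hxy).2 (hcomplete x hx y hy)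
        obtain ⟨A', B', hunion, hsplit⟩ :=
          exists_isHomogeneousSplit_insert hv hAB hA hB hanti' (fun h' => h h'.of_compl)
        exact ⟨A', B', hunion, hsplit.of_compl⟩
      · exact exists_isHomogeneousSplit_insert hv hAB hA hB hanti h
    · obtain ⟨u, rfl⟩ := Set.ncard_eq_one.1 hs.symm
      exact ⟨{v}, {u}, Set.singleton_union, isHomogeneousSplit_singleton (by simpa using hv)⟩

def IsPseudoCographSplit (G : SimpleGraph V) (v : V) (A B : Set V) : Prop :=
  A ∩ B = {v} ∧ 1 < A.ncard ∧ 1 < B.ncard ∧ ¬ G.HasInducedP4On A ∧ ¬ G.HasInducedP4On B ∧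
    G.CompleteOrAnticomplete (A \ {v}) (B \ {v})

theorem IsPseudoCographSplit.isPseudoCograph_induce (h : G.IsPseudoCographSplit v A B) :
    IsPseudoCograph (G.induce (A ∪ B)) := by
  obtain ⟨hAB, hA, hB, hA4, hB4, hcross⟩ := h
  have hv : v ∈ A ∩ B := hAB ▸ rfl
  have hcard {C : Set V} (hC : C ⊆ A ∪ B) :
      (Subtype.val ⁻¹' C : Set ↥(A ∪ B)).ncard = C.ncard :=
    Set.ncard_preimage_of_injective_subset_range Subtype.val_injective
      (by rwa [Subtype.range_coe])
  have hfree {C : Set V} (hC : ¬ G.HasInducedP4On C) :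
      IsP4Free ((G.induce (A ∪ B)).induce (Subtype.val ⁻¹' C)) := by
    refine isP4Free_induce_iff.2 fun h => hC ((h.map (Embedding.induce _)).mono ?_)
    rintro _ ⟨x, hx, rfl⟩
    exact hx
  refine Or.inr ⟨⟨v, Or.inl hv.1⟩, Subtype.val ⁻¹' A, Subtype.val ⁻¹' B,
    Set.eq_univ_of_forall fun x => x.2, ?_, (hcard Set.subset_union_left).symm ▸ hA,
    (hcard Set.subset_union_right).symm ▸ hB, hfree hA4, hfree hB4, ?_⟩
  · ext x
    simp only [← Set.preimage_inter, hAB, Set.mem_preimage, Set.mem_singleton_iff,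
      Subtype.ext_iff]
  · refine (hcross.comap (Function.Embedding.subtype _)).mono ?_ ?_ <;>
      exact fun x hx => ⟨hx.1, fun h => hx.2 (Subtype.ext h)⟩

theorem IsHomogeneousSplit.isPseudoCographSplit_insert (h : G.IsHomogeneousSplit A B)
    (hb : b ∈ A) (hA : 1 < A.ncard) (hB : B.Finite) (hA4 : ¬ G.HasInducedP4On A)
    (hB4 : ¬ G.HasInducedP4On B) : G.IsPseudoCographSplit b A (insert b B) := by
  obtain ⟨hAB, -, hBne, hcross⟩ := h
  have hbB : b ∉ B := hAB.notMem_of_mem_left hb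
  refine ⟨by rw [Set.inter_insert_of_mem hb, hAB.inter_eq, insert_empty_eq], hA, ?_, hA4,
    not_hasInducedP4On_insert (hcross.mono (Set.singleton_subset_iff.2 hb) subset_rfl) hB4,
    hcross.mono Set.sdiff_subset fun y hy => hy.1.resolve_left hy.2⟩
  rw [Set.ncard_insert_of_notMem hbB hB]
  have := (Set.ncard_pos hB).2 hBne
  omega

theorem IsHomogeneousSplit.exists_isPseudoCographSplit (h : G.IsHomogeneousSplit A B)
    (hA4 : ¬ G.HasInducedP4On A) (hB4 : ¬ G.HasInducedP4On B) (h3 : 2 < (A ∪ B).ncard) :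
    ∃ v A' B', A' ∪ B' = A ∪ B ∧ G.IsPseudoCographSplit v A' B' := by
  have hfin : (A ∪ B).Finite := Set.finite_of_ncard_pos (by omega)
  have := Set.ncard_union_le A B
  rcases (show 1 < A.ncard ∨ 1 < B.ncard by omega) with hA | hB
  · obtain ⟨b, hb⟩ := h.2.1
    refine ⟨b, A, insert b B, ?_,
      h.isPseudoCographSplit_insert hb hA (hfin.subset Set.subset_union_right) hA4 hB4⟩
    rw [Set.union_insert, Set.insert_eq_of_mem (Set.mem_union_left B hb)]
  · obtain ⟨a, ha⟩ := h.2.2.1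
    refine ⟨a, B, insert a A, ?_,
      h.symm.isPseudoCographSplit_insert ha hB (hfin.subset Set.subset_union_left) hB4 hA4⟩
    rw [Set.union_insert, Set.insert_eq_of_mem (Set.mem_union_left A ha), Set.union_comm]

end SimpleGraph

open SimpleGraph

namespace IsPseudoCographAt

variable {V : Type} {G : SimpleGraph V} {v : V} {V1 V2 W : Set V}

theorem isPseudoCographSplit_inter (hG : IsPseudoCographAt G v V1 V2) (hW : W.Finite)
    (hv : v ∈ W) (hW1 : ¬ W ⊆ V1) (hW2 : ¬ W ⊆ V2) :
    G.IsPseudoCographSplit v (W ∩ V1) (W ∩ V2) := by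
  obtain ⟨hunion, hinter, -, -, hV1, hV2, hcross⟩ := hG
  rw [isP4Free_induce_iff] at hV1 hV2
  have hv12 : v ∈ V1 ∩ V2 := hinter ▸ rfl
  have hmem (x : V) : x ∈ V1 ∪ V2 := hunion ▸ Set.mem_univ x
  obtain ⟨a, haW, ha1⟩ := Set.not_subset.1 hW1
  obtain ⟨b, hbW, hb2⟩ := Set.not_subset.1 hW2
  refine ⟨?_, ?_, ?_, fun h => hV1 (h.mono Set.inter_subset_right),
    fun h => hV2 (h.mono Set.inter_subset_right),
    CompleteOrAnticomplete.mono (Set.sdiff_subset_sdiff_left Set.inter_subset_right)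
      (Set.sdiff_subset_sdiff_left Set.inter_subset_right) hcross⟩
  · rw [Set.inter_inter_inter_comm, Set.inter_self, hinter, Set.inter_singleton_of_mem hv]
  · exact (Set.one_lt_ncard (hW.subset Set.inter_subset_left)).2
      ⟨v, ⟨hv, hv12.1⟩, b, ⟨hbW, (hmem b).resolve_right hb2⟩, fun h => hb2 (h ▸ hv12.2)⟩
  · exact (Set.one_lt_ncard (hW.subset Set.inter_subset_left)).2
      ⟨v, ⟨hv, hv12.2⟩, a, ⟨haW, (hmem a).resolve_left ha1⟩, fun h => ha1 (h ▸ hv12.1)⟩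

theorem isHomogeneousSplit_inter (hG : IsPseudoCographAt G v V1 V2) (hv : v ∉ W)
    (hW1 : ¬ W ⊆ V1) (hW2 : ¬ W ⊆ V2) : G.IsHomogeneousSplit (W ∩ V1) (W ∩ V2) := by
  obtain ⟨hunion, hinter, -, -, -, -, hcross⟩ := hG
  have hmem (x : V) : x ∈ V1 ∪ V2 := hunion ▸ Set.mem_univ x
  obtain ⟨a, haW, ha1⟩ := Set.not_subset.1 hW1
  obtain ⟨b, hbW, hb2⟩ := Set.not_subset.1 hW2
  have hoff : W ⊆ {v}ᶜ := fun x hx hxv => hv (hxv ▸ hx)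
  refine ⟨?_, ⟨b, hbW, (hmem b).resolve_right hb2⟩, ⟨a, haW, (hmem a).resolve_left ha1⟩, ?_⟩
  · rw [Set.disjoint_iff_inter_eq_empty, Set.inter_inter_inter_comm, Set.inter_self, hinter,
      Set.inter_singleton_eq_empty.2 hv]
  · refine CompleteOrAnticomplete.mono ?_ ?_ hcross <;> exact fun x hx => ⟨hx.2, hoff hx.1⟩

theorem exists_isPseudoCographSplit (hG : IsPseudoCographAt G v V1 V2) (hW : 2 < W.ncard) :
    ∃ u A B, A ∪ B = W ∧ G.IsPseudoCographSplit u A B := by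
  have hWfin : W.Finite := Set.finite_of_ncard_pos (by omega)
  have hunion : W ∩ V1 ∪ W ∩ V2 = W := by
    rw [← Set.inter_union_distrib_left, hG.1, Set.inter_univ]
  have hV1 : ¬ G.HasInducedP4On V1 := isP4Free_induce_iff.1 hG.2.2.2.2.1
  have hV2 : ¬ G.HasInducedP4On V2 := isP4Free_induce_iff.1 hG.2.2.2.2.2.1
  by_cases hcut : v ∈ W ∧ ¬ W ⊆ V1 ∧ ¬ W ⊆ V2
  · exact ⟨v, W ∩ V1, W ∩ V2, hunion,
      hG.isPseudoCographSplit_inter hWfin hcut.1 hcut.2.1 hcut.2.2⟩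
  have hsplit_of_subset {U : Set V} (hU : ¬ G.HasInducedP4On U) (hWU : W ⊆ U) :
      ∃ A B, A ∪ B = W ∧ G.IsHomogeneousSplit A B ∧ ¬ G.HasInducedP4On A ∧
        ¬ G.HasInducedP4On B := by
    obtain ⟨A, B, rfl, hsplit⟩ :=
      exists_isHomogeneousSplit_of_not_hasInducedP4On (by omega) fun h => hU (h.mono hWU)
    exact ⟨A, B, rfl, hsplit, fun h => hU (h.mono (Set.subset_union_left.trans hWU)),
      fun h => hU (h.mono (Set.subset_union_right.trans hWU))⟩
  obtain ⟨A, B, rfl, hsplit, hA4, hB4⟩ : ∃ A B, A ∪ B = W ∧ G.IsHomogeneousSplit A B ∧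
      ¬ G.HasInducedP4On A ∧ ¬ G.HasInducedP4On B := by
    by_cases hW1 : W ⊆ V1
    · exact hsplit_of_subset hV1 hW1
    by_cases hW2 : W ⊆ V2
    · exact hsplit_of_subset hV2 hW2
    exact ⟨W ∩ V1, W ∩ V2, hunion,
      hG.isHomogeneousSplit_inter (fun hv => hcut ⟨hv, hW1, hW2⟩) hW1 hW2,
      fun h => hV1 (h.mono Set.inter_subset_right), fun h => hV2 (h.mono Set.inter_subset_right)⟩
  exact hsplit.exists_isPseudoCographSplit hA4 hB4 hW

end IsPseudoCographAt

/-- Every induced subgraph (on a nonempty vertex set) of a pseudo-cograph is a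
pseudo-cograph. -/
theorem isPseudoCograph_induce {V : Type} [Fintype V] (G : SimpleGraph V)
    (h : IsPseudoCograph G) (W : Set V) :
    IsPseudoCograph (G.induce W) := by
  rcases le_or_gt W.ncard 2 with hW | hW
  · exact Or.inl (by rwa [Nat.card_coe_set_eq])
  obtain hV | ⟨v, V1, V2, hG⟩ := h
  · have := W.ncard_le_card
    omega
  obtain ⟨u, A, B, rfl, hsplit⟩ := hG.exists_isPseudoCographSplit hW
  exact hsplit.isPseudoCograph_induce
end

section
/- Let G be the disjoint union of two vertex-disjoint paths on four vertices (two copies of P₄). Then G is not a pseudo-cograph. -/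
/-!
Let `G = P₄ + P₄` split at `v` into `V₁` and `V₂`. If every vertex of `V₁ \ {v}` is adjacent to
every vertex of `V₂ \ {v}`, then any `x ∈ V₁ \ {v}` and `y ∈ V₂ \ {v}` together dominate all
vertices but `v`; as every vertex of `G` has degree at most `2`, this covers at most
`1 + 2 + 2 < 8` vertices. Otherwise no edge crosses between the two sides away from `v`, so the
copy of `P₄` not containing `v`, being connected, lies entirely in `V₁` or in `V₂`, and the
corresponding side is not a cograph.
-/

open SimpleGraph

namespace SimpleGraph

variable {V W : Type*} {G : SimpleGraph V} {H : SimpleGraph W}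

theorem Reachable.mem_iff_of_forall_adj {S : Set V} (hS : ∀ a b, G.Adj a b → (a ∈ S ↔ b ∈ S))
    {u w : V} (huw : G.Reachable u w) : u ∈ S ↔ w ∈ S := by
  obtain ⟨p⟩ := huw
  induction p with
  | nil => rfl
  | cons hadj _ ih => exact (hS _ _ hadj).trans ih

instance pathGraph.decidableRelAdj (n : ℕ) : DecidableRel (pathGraph n).Adj := fun _ _ =>
  decidable_of_iff _ pathGraph_adj.symm

instance sum.decidableRelAdj [DecidableRel G.Adj] [DecidableRel H.Adj] :
    DecidableRel (G ⊕g H).Adj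
  | .inl a, .inl b => decidable_of_iff (G.Adj a b) sum_adj_inl.symm
  | .inr a, .inr b => decidable_of_iff (H.Adj a b) sum_adj_inr.symm
  | .inl _, .inr _ => isFalse (not_adj_sum_inl_inr _ _)
  | .inr _, .inl _ => isFalse fun h => not_adj_sum_inl_inr _ _ h.symm

end SimpleGraph

section Split

variable {V W : Type*} {G : SimpleGraph V} {v : V} {V1 V2 : Set V}

theorem adj_or_adj_of_forall_adj (hU : V1 ∪ V2 = Set.univ)
    (hjoin : ∀ x ∈ V1 \ {v}, ∀ y ∈ V2 \ {v}, G.Adj x y) {x y z : V} (hx : x ∈ V1 \ {v})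
    (hy : y ∈ V2 \ {v}) (hz : z ≠ v) : G.Adj x z ∨ G.Adj z y := by
  rcases (Set.eq_univ_iff_forall.mp hU z) with hz1 | hz2
  · exact .inr (hjoin z ⟨hz1, hz⟩ y hy)
  · exact .inl (hjoin x hx z ⟨hz2, hz⟩)

theorem mem_iff_mem_of_forall_not_adj (hU : V1 ∪ V2 = Set.univ)
    (hsep : ∀ x ∈ V1 \ {v}, ∀ y ∈ V2 \ {v}, ¬ G.Adj x y) {x y : V} (hx : x ≠ v) (hy : y ≠ v)
    (hxy : G.Adj x y) : x ∈ V1 ↔ y ∈ V1 := by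
  have mem_two_of_not_mem_one : ∀ z, z ∉ V1 → z ∈ V2 := fun z hz =>
    (Set.eq_univ_iff_forall.mp hU z).resolve_left hz
  constructor
  · intro hx1
    by_contra hy1
    exact hsep x ⟨hx1, hx⟩ y ⟨mem_two_of_not_mem_one y hy1, hy⟩ hxy
  · intro hy1
    by_contra hx1
    exact hsep y ⟨hy1, hy⟩ x ⟨mem_two_of_not_mem_one x hx1, hx⟩ hxy.symm

theorem range_subset_or_range_subset_of_forall_not_adj {H : SimpleGraph W} (hH : H.Connected)
    (f : H →g G) (hv : v ∉ Set.range f) (hU : V1 ∪ V2 = Set.univ)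
    (hsep : ∀ x ∈ V1 \ {v}, ∀ y ∈ V2 \ {v}, ¬ G.Adj x y) :
    Set.range f ⊆ V1 ∨ Set.range f ⊆ V2 := by
  have hfv : ∀ a, f a ≠ v := fun a h => hv ⟨a, h⟩
  have hconst : ∀ a b, f a ∈ V1 ↔ f b ∈ V1 := fun a b =>
    (hH.preconnected a b).mem_iff_of_forall_adj (S := f ⁻¹' V1) fun a b hab =>
      mem_iff_mem_of_forall_not_adj hU hsep (hfv a) (hfv b) (f.map_adj hab)
  obtain ⟨a₀⟩ := hH.nonempty
  by_cases ha₀ : f a₀ ∈ V1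
  · exact .inl (Set.range_subset_iff.mpr fun a => (hconst a₀ a).mp ha₀)
  · refine .inr (Set.range_subset_iff.mpr fun a => ?_)
    exact (Set.eq_univ_iff_forall.mp hU (f a)).resolve_left fun ha => ha₀ ((hconst a₀ a).mpr ha)

end Split

theorem not_isP4Free_induce_of_range_subset {V : Type} {G : SimpleGraph V} {s : Set V}
    (f : pathGraph 4 ↪g G) (hs : Set.range f ⊆ s) : ¬ IsP4Free (G.induce s) := fun hfree =>
  hfree ⟨(G.induceHomOfLE hs).comp f.isoInduceRange.toEmbedding⟩

theorem sum_pathGraph_four_exists_ne_not_adj_not_adj (v x y : Fin 4 ⊕ Fin 4) :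
    ∃ z, z ≠ v ∧ ¬ (pathGraph 4 ⊕g pathGraph 4).Adj x z ∧
      ¬ (pathGraph 4 ⊕g pathGraph 4).Adj z y := by
  revert v x y
  decide

theorem sum_pathGraph_four_exists_embedding_not_mem_range (v : Fin 4 ⊕ Fin 4) :
    ∃ f : pathGraph 4 ↪g pathGraph 4 ⊕g pathGraph 4, v ∉ Set.range f := by
  rcases v with a | a
  · exact ⟨Embedding.sumInr, by simp [Embedding.sumInr]⟩
  · exact ⟨Embedding.sumInl, by simp [Embedding.sumInl]⟩

/-- The disjoint union of two vertex-disjoint paths on four vertices is not a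
pseudo-cograph. -/
theorem not_isPseudoCograph_two_P4 :
    ¬ IsPseudoCograph (SimpleGraph.pathGraph 4 ⊕g SimpleGraph.pathGraph 4) := by
  rintro (hcard | ⟨v, V1, V2, hU, -, hV1, hV2, hfree1, hfree2, hjoin | hsep⟩)
  · simp at hcard
  · obtain ⟨x, hx, hxv⟩ := Set.exists_ne_of_one_lt_ncard hV1 v
    obtain ⟨y, hy, hyv⟩ := Set.exists_ne_of_one_lt_ncard hV2 v
    obtain ⟨z, hzv, hxz, hzy⟩ := sum_pathGraph_four_exists_ne_not_adj_not_adj v x y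
    exact (adj_or_adj_of_forall_adj hU hjoin ⟨hx, hxv⟩ ⟨hy, hyv⟩ hzv).elim hxz hzy
  · obtain ⟨f, hf⟩ := sum_pathGraph_four_exists_embedding_not_mem_range v
    rcases range_subset_or_range_subset_of_forall_not_adj (pathGraph_connected 3) f.toHom hf hU
      hsep with h1 | h2
    · exact not_isP4Free_induce_of_range_subset f h1 hfree1
    · exact not_isP4Free_induce_of_range_subset f h2 hfree2
end
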